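/- arXiv:2310.09250 — 7 statements merged into one kernel-verified Lean document; each statement's English description precedes it below -/
import Mathlib

section
/- Let c > 1 and let w be a random variable with w = c/(c+F) where F has density 1/(1+x)^2 on (0,∞). Then E[w] = c(c - log c - 1)/(c-1)^2 and Var(w) = c((c-1)^2 - c·(log c)^2)/(c-1)^4. -/
/-!
Both moments are elementary integrals. By partial fractions, `c / ((c + x) (1 + x)²)` and
`c² / ((c + x)² (1 + x)²)` have antiderivatives built from `log (c + x) - log (1 + x)` and the
reciprocals `(1 + x)⁻¹`, `(c + x)⁻¹`, all of which vanish at infinity; so each integral over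
`(0, ∞)` is minus the antiderivative at `0`. The variance `E[w²] - E[w]²` is then algebra in
`c` and `log c`.
-/

open MeasureTheory Real Set Filter Topology

lemma tendsto_log_add_sub_log_add_atTop (a b : ℝ) :
    Tendsto (fun y => log (a + y) - log (b + y)) atTop (𝓝 0) := by
  have h := (tendsto_log_comp_add_sub_log a).sub (tendsto_log_comp_add_sub_log b)
  simp only [sub_zero, sub_sub_sub_cancel_right] at h
  simpa only [add_comm] using h

lemma tendsto_inv_add_atTop (a : ℝ) : Tendsto (fun y : ℝ => (a + y)⁻¹) atTop (𝓝 0) :=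
  tendsto_inv_atTop_zero.comp (tendsto_atTop_add_const_left _ a tendsto_id)

lemma integral_Ioi_div_add_mul_one_div_one_add_sq {c : ℝ} (hc0 : 0 < c) (hc1 : c ≠ 1) :
    ∫ x in Ioi (0 : ℝ), (c / (c + x)) * (1 / (1 + x) ^ 2)
      = c * (c - log c - 1) / (c - 1) ^ 2 := by
  have hc : c - 1 ≠ 0 := sub_ne_zero.mpr hc1
  set G : ℝ → ℝ := fun y => c * ((log (c + y) - log (1 + y)) / (c - 1) ^ 2 - (1 + y)⁻¹ / (c - 1))
  have hderiv : ∀ x ∈ Ici (0 : ℝ), HasDerivAt G ((c / (c + x)) * (1 / (1 + x) ^ 2)) x := by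
    intro x (hx : 0 ≤ x)
    have hcx : c + x ≠ 0 := by positivity
    have h1x : 1 + x ≠ 0 := by positivity
    have dlog_c := ((hasDerivAt_id x).const_add c).log hcx
    have dlog_1 := ((hasDerivAt_id x).const_add 1).log h1x
    have dinv_1 := ((hasDerivAt_id x).const_add 1).inv h1x
    refine ((((dlog_c.sub dlog_1).div_const _).sub (dinv_1.div_const _)).const_mul c).congr_deriv ?_
    simp only [id]
    field_simp
    ring
  have hG : Tendsto G atTop (𝓝 0) := by
    simpa using ((((tendsto_log_add_sub_log_add_atTop c 1).div_const ((c - 1) ^ 2)).sub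
      ((tendsto_inv_add_atTop 1).div_const (c - 1))).const_mul c)
  rw [integral_Ioi_of_hasDerivAt_of_nonneg' hderiv
    (fun x (hx : 0 < x) => by positivity) hG]
  simp only [G, add_zero, log_one]
  field_simp
  ring

lemma integral_Ioi_div_add_sq_mul_one_div_one_add_sq {c : ℝ} (hc0 : 0 < c) (hc1 : c ≠ 1) :
    ∫ x in Ioi (0 : ℝ), (c / (c + x)) ^ 2 * (1 / (1 + x) ^ 2)
      = c * (c ^ 2 - 1 - 2 * c * log c) / (c - 1) ^ 3 := by
  have hc : c - 1 ≠ 0 := sub_ne_zero.mpr hc1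
  set G : ℝ → ℝ := fun y => c ^ 2 / (c - 1) ^ 2 *
    (2 / (c - 1) * (log (c + y) - log (1 + y)) - (1 + y)⁻¹ - (c + y)⁻¹)
  have hderiv : ∀ x ∈ Ici (0 : ℝ), HasDerivAt G ((c / (c + x)) ^ 2 * (1 / (1 + x) ^ 2)) x := by
    intro x (hx : 0 ≤ x)
    have hcx : c + x ≠ 0 := by positivity
    have h1x : 1 + x ≠ 0 := by positivity
    have dlog_c := ((hasDerivAt_id x).const_add c).log hcx
    have dlog_1 := ((hasDerivAt_id x).const_add 1).log h1x
    have dinv_c := ((hasDerivAt_id x).const_add c).inv hcx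
    have dinv_1 := ((hasDerivAt_id x).const_add 1).inv h1x
    refine (((((dlog_c.sub dlog_1).const_mul _).sub dinv_1).sub dinv_c).const_mul _).congr_deriv ?_
    simp only [id]
    field_simp
    ring
  have hG : Tendsto G atTop (𝓝 0) := by
    simpa using (((((tendsto_log_add_sub_log_add_atTop c 1).const_mul (2 / (c - 1))).sub
      (tendsto_inv_add_atTop 1)).sub (tendsto_inv_add_atTop c)).const_mul (c ^ 2 / (c - 1) ^ 2))
  rw [integral_Ioi_of_hasDerivAt_of_nonneg' hderiv
    (fun x (hx : 0 < x) => by positivity) hG]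
  simp only [G, add_zero, log_one]
  field_simp
  ring

/-- For c > 1 and w = c/(c+F) with F ~ F(2,2) (density `1/(1+x)^2` on (0,∞)):
`E[w] = c(c - log c - 1)/(c-1)^2` and
`Var(w) = c((c-1)^2 - c(log c)^2)/(c-1)^4`. -/
theorem mean_and_variance_softmax_output (c : ℝ) (hc : 1 < c) :
    (∫ x in Ioi (0 : ℝ), (c / (c + x)) * (1 / (1 + x) ^ 2)
        = c * (c - Real.log c - 1) / (c - 1) ^ 2) ∧
    ((∫ x in Ioi (0 : ℝ), (c / (c + x)) ^ 2 * (1 / (1 + x) ^ 2))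
        - (∫ x in Ioi (0 : ℝ), (c / (c + x)) * (1 / (1 + x) ^ 2)) ^ 2
        = c * ((c - 1) ^ 2 - c * (Real.log c) ^ 2) / (c - 1) ^ 4) := by
  have hc0 : 0 < c := by linarith
  have hc1 : c ≠ 1 := hc.ne'
  have hmean := integral_Ioi_div_add_mul_one_div_one_add_sq hc0 hc1
  refine ⟨hmean, ?_⟩
  rw [hmean, integral_Ioi_div_add_sq_mul_one_div_one_add_sq hc0 hc1]
  have hc_sub : c - 1 ≠ 0 := sub_ne_zero.mpr hc1
  field_simp
  ring
end

section
/- For all c > 1, the function c ↦ |c·log(c) - c + 1| / sqrt(c·((c-1)^2 - c·(log c)^2)) is bounded above by sqrt(3), and its limit as c → 1+ equals sqrt(3). -/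
open Real Filter Set Topology
open scoped Nat

/-!
Substituting `c = e^u`, both `bias c = c log c - c + 1` and `3 variance c - (bias c)²` become
exponential polynomials in `u`. The latter vanishes to order five at `u = 0`, and its fifth
derivative is nonnegative on `[0, ∞)` and bounded on `[0, 1]`; the former has second derivative
`(1 + u) e^u ≥ 1`. Integrating these bounds from `0` gives
`0 ≤ 3 variance - bias² ≤ C u⁵` and `bias ≥ u² / 2`, hence `3 - 12 C u ≤ bias² / variance ≤ 3`,
and the ratio is the square root of `bias² / variance`.
-/

theorem mul_pow_div_factorial_le_of_iterated_hasDerivAt {f : ℕ → ℝ → ℝ}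
    (hf : ∀ k x, HasDerivAt (f k) (f (k + 1) x) x) {n : ℕ} (hf₀ : ∀ k < n, f k 0 = 0)
    {m a : ℝ} (hm : ∀ x ∈ Icc 0 a, m ≤ f n x) :
    ∀ x ∈ Icc 0 a, m * x ^ n / n ! ≤ f 0 x := by
  induction n generalizing f with
  | zero => simpa using hm
  | succ n ih =>
    have hf₁ : ∀ x ∈ Icc 0 a, m * x ^ n / n ! ≤ f 1 x :=
      ih (f := fun k => f (k + 1)) (fun k x => hf (k + 1) x)
        (fun k hk => hf₀ (k + 1) (by omega)) hm
    have hpow (x : ℝ) :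
        HasDerivAt (fun x => m * x ^ (n + 1) / (n + 1)!) (m * x ^ n / n !) x := by
      refine (((hasDerivAt_pow (n + 1) x).const_mul m).div_const _).congr_deriv ?_
      rw [Nat.factorial_succ]
      push_cast
      field_simp
    exact image_le_of_deriv_right_le_deriv_boundary
      (fun x _ => (hpow x).continuousAt.continuousWithinAt)
      (fun x _ => (hpow x).hasDerivWithinAt) (by simp [hf₀ 0 (by omega)])
      (fun x _ => (hf 0 x).continuousAt.continuousWithinAt)
      (fun x _ => (hf 0 x).hasDerivWithinAt) (fun x hx => hf₁ x (Ico_subset_Icc_self hx))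

theorem le_mul_pow_div_factorial_of_iterated_hasDerivAt {f : ℕ → ℝ → ℝ}
    (hf : ∀ k x, HasDerivAt (f k) (f (k + 1) x) x) {n : ℕ} (hf₀ : ∀ k < n, f k 0 = 0)
    {M a : ℝ} (hM : ∀ x ∈ Icc 0 a, f n x ≤ M) :
    ∀ x ∈ Icc 0 a, f 0 x ≤ M * x ^ n / n ! := by
  intro x hx
  have := mul_pow_div_factorial_le_of_iterated_hasDerivAt (f := fun k x => -f k x)
    (fun k x => (hf k x).neg) (fun k hk => by simp [hf₀ k hk]) (m := -M)
    (fun x hx => neg_le_neg (hM x hx)) x hx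
  linarith [show -M * x ^ n / n ! = -(M * x ^ n / n !) by ring]

/-- The functions `a₃ e^{3u} + (a₂ + b₂ u + c₂ u²) e^{2u} + (a₁ + b₁ u) e^u + a₀`: a class closed
under differentiation that contains `bias ∘ exp` and `3 variance ∘ exp - (bias ∘ exp)²`. -/
structure ExpQuad where
  a₃ : ℝ
  a₂ : ℝ
  b₂ : ℝ
  c₂ : ℝ
  a₁ : ℝ
  b₁ : ℝ
  a₀ : ℝ

namespace ExpQuad

noncomputable def eval (p : ExpQuad) (u : ℝ) : ℝ :=
  p.a₃ * exp (3 * u) + (p.a₂ + p.b₂ * u + p.c₂ * u ^ 2) * exp (2 * u) +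
    (p.a₁ + p.b₁ * u) * exp u + p.a₀

noncomputable def derivative (p : ExpQuad) : ExpQuad :=
  ⟨3 * p.a₃, 2 * p.a₂ + p.b₂, 2 * p.b₂ + 2 * p.c₂, 2 * p.c₂, p.a₁ + p.b₁, p.b₁, 0⟩

theorem hasDerivAt_eval (p : ExpQuad) (u : ℝ) : HasDerivAt p.eval (p.derivative.eval u) u := by
  have hexp (k : ℝ) : HasDerivAt (fun u => exp (k * u)) (exp (k * u) * k) u := by
    simpa using ((hasDerivAt_id u).const_mul k).exp
  have h₃ := (hexp 3).const_mul p.a₃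
  have h₂ := (((hasDerivAt_id u).const_mul p.b₂).const_add p.a₂ |>.add
    ((hasDerivAt_pow 2 u).const_mul p.c₂)).mul (hexp 2)
  have h₁ := (((hasDerivAt_id u).const_mul p.b₁).const_add p.a₁).mul (Real.hasDerivAt_exp u)
  refine (((h₃.add h₂).add h₁).add_const p.a₀).congr_deriv ?_
  simp only [eval, derivative, id, Pi.add_apply]
  ring

theorem hasDerivAt_eval_iterate (p : ExpQuad) (k : ℕ) (u : ℝ) :
    HasDerivAt (derivative^[k] p).eval ((derivative^[k + 1] p).eval u) u := by
  rw [Function.iterate_succ_apply']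
  exact hasDerivAt_eval _ u

end ExpQuad

open ExpQuad

/-- `bias c` and `variance c` are `β (c - 1)²` and `σ² (c - 1)⁴` in the notation of the paper. -/
noncomputable def bias (c : ℝ) : ℝ := c * log c - c + 1

noncomputable def variance (c : ℝ) : ℝ := c * ((c - 1) ^ 2 - c * log c ^ 2)

noncomputable def biasExp : ExpQuad := ⟨0, 0, 0, 0, -1, 1, 1⟩

noncomputable def varianceGapExp : ExpQuad := ⟨3, -7, 2, -4, 5, -2, -1⟩

theorem bias_exp (u : ℝ) : bias (exp u) = biasExp.eval u := by
  simp only [bias, biasExp, eval, log_exp]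
  ring

theorem three_mul_variance_sub_sq_bias_exp (u : ℝ) :
    3 * variance (exp u) - bias (exp u) ^ 2 = varianceGapExp.eval u := by
  have h₂ : exp (2 * u) = exp u ^ 2 := by rw [← exp_nat_mul]; norm_num
  have h₃ : exp (3 * u) = exp u ^ 3 := by rw [← exp_nat_mul]; norm_num
  simp only [bias, variance, varianceGapExp, eval, log_exp, h₂, h₃]
  ring

theorem sq_div_two_le_eval_biasExp {u : ℝ} (hu : 0 ≤ u) : u ^ 2 / 2 ≤ biasExp.eval u := by
  have hsecond (x : ℝ) (hx : 0 ≤ x) : 1 ≤ (derivative^[2] biasExp).eval x := by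
    norm_num [Function.iterate_succ_apply', derivative, biasExp, eval]
    nlinarith [add_one_le_exp x, exp_pos x]
  have := mul_pow_div_factorial_le_of_iterated_hasDerivAt (hasDerivAt_eval_iterate biasExp) (n := 2)
    (fun k hk => by
      interval_cases k <;> norm_num [Function.iterate_succ_apply', derivative, biasExp, eval])
    (a := u) (fun x hx => hsecond x hx.1) u ⟨hu, le_rfl⟩
  simpa using this

theorem iterate_derivative_varianceGapExp_eval_zero :
    ∀ k < 5, (derivative^[k] varianceGapExp).eval 0 = 0 := by
  intro k hk
  interval_cases k <;>
    norm_num [Function.iterate_succ_apply', derivative, varianceGapExp, eval]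

theorem iterate_five_derivative_varianceGapExp :
    derivative^[5] varianceGapExp = ⟨729, -704, -576, -128, -5, -2, 0⟩ := by
  norm_num [Function.iterate_succ_apply', derivative, varianceGapExp]

theorem eval_varianceGapExp_nonneg {u : ℝ} (hu : 0 ≤ u) : 0 ≤ varianceGapExp.eval u := by
  have hfifth (x : ℝ) (hx : 0 ≤ x) : 0 ≤ (derivative^[5] varianceGapExp).eval x := by
    have h₃ : exp (3 * x) = exp x * exp (2 * x) := by rw [← exp_add]; ring_nf
    have hle : exp x ≤ exp (2 * x) := exp_le_exp.2 (by linarith)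
    rw [iterate_five_derivative_varianceGapExp, eval, h₃]
    dsimp only
    nlinarith [quadratic_le_exp_of_nonneg hx, exp_pos (2 * x), exp_pos x,
      mul_nonneg hx (exp_pos (2 * x)).le, mul_nonneg (sq_nonneg x) (exp_pos (2 * x)).le]
  have := mul_pow_div_factorial_le_of_iterated_hasDerivAt (hasDerivAt_eval_iterate varianceGapExp)
    iterate_derivative_varianceGapExp_eval_zero (a := u) (fun x hx => hfifth x hx.1) u
    ⟨hu, le_rfl⟩
  simpa using this

theorem eval_varianceGapExp_le {u : ℝ} (hu : u ∈ Icc (0 : ℝ) 1) :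
    varianceGapExp.eval u ≤ 729 * exp 3 * u ^ 5 / 120 := by
  have hfifth (x : ℝ) (hx : x ∈ Icc (0 : ℝ) 1) :
      (derivative^[5] varianceGapExp).eval x ≤ 729 * exp 3 := by
    have hexp : exp (3 * x) ≤ exp 3 := exp_le_exp.2 (by linarith [hx.2])
    rw [iterate_five_derivative_varianceGapExp, eval]
    dsimp only
    nlinarith [exp_pos (2 * x), exp_pos x, mul_nonneg hx.1 (exp_pos (2 * x)).le,
      mul_nonneg (sq_nonneg x) (exp_pos (2 * x)).le, mul_nonneg hx.1 (exp_pos x).le]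
  have := le_mul_pow_div_factorial_of_iterated_hasDerivAt (hasDerivAt_eval_iterate varianceGapExp)
    iterate_derivative_varianceGapExp_eval_zero hfifth u hu
  simpa [Nat.factorial] using this

theorem sq_bias_le_three_mul_variance {c : ℝ} (hc : 1 ≤ c) : bias c ^ 2 ≤ 3 * variance c := by
  have hgap := three_mul_variance_sub_sq_bias_exp (log c)
  rw [exp_log (by linarith)] at hgap
  linarith [eval_varianceGapExp_nonneg (log_nonneg hc)]

theorem sq_bias_div_variance_le_three {c : ℝ} (hc : 1 ≤ c) : bias c ^ 2 / variance c ≤ 3 := by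
  have h := sq_bias_le_three_mul_variance hc
  exact div_le_of_le_mul₀ (by nlinarith [sq_nonneg (bias c)]) zero_le_three (by linarith)

theorem three_sub_le_sq_bias_div_variance {c : ℝ} (hc₁ : 1 < c) (hce : c ≤ exp 1) :
    3 - 729 * exp 3 / 10 * log c ≤ bias c ^ 2 / variance c := by
  have hc₀ : 0 < c := by linarith
  set L := log c with hL
  have hL₀ : 0 < L := log_pos hc₁
  have hL₁ : L ≤ 1 := by rw [hL, log_le_iff_le_exp hc₀]; exact hce
  have hgap : 3 * variance c - bias c ^ 2 ≤ 729 * exp 3 * L ^ 5 / 120 := by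
    rw [← exp_log hc₀, three_mul_variance_sub_sq_bias_exp, ← hL]
    exact eval_varianceGapExp_le ⟨hL₀.le, hL₁⟩
  have hbias : L ^ 2 / 2 ≤ bias c := by
    rw [← exp_log hc₀, bias_exp, ← hL]
    exact sq_div_two_le_eval_biasExp hL₀.le
  have hvar : L ^ 4 / 12 ≤ variance c := by
    nlinarith [sq_bias_le_three_mul_variance hc₁.le, pow_le_pow_left₀ (by positivity) hbias 2]
  have hvar₀ : 0 < variance c := lt_of_lt_of_le (by positivity) hvar
  rw [le_div_iff₀ hvar₀]
  have : 729 * exp 3 * L ^ 5 / 120 ≤ 729 * exp 3 / 10 * L * variance c := by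
    calc 729 * exp 3 * L ^ 5 / 120 = 729 * exp 3 / 10 * L * (L ^ 4 / 12) := by ring
      _ ≤ _ := by gcongr
  linarith

/-- The bias-to-standard-deviation ratio
`|c·log c - c + 1| / sqrt(c((c-1)^2 - c(log c)^2))` is bounded above by `√3`
on `(1,∞)`, and tends to `√3` as `c → 1⁺`. -/
theorem ratio_le_sqrt_three :
    (∀ c : ℝ, 1 < c →
      |c * Real.log c - c + 1| / Real.sqrt (c * ((c - 1) ^ 2 - c * (Real.log c) ^ 2))
        ≤ Real.sqrt 3) ∧
    Tendsto
      (fun c : ℝ =>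
        |c * Real.log c - c + 1| / Real.sqrt (c * ((c - 1) ^ 2 - c * (Real.log c) ^ 2)))
      (nhdsWithin 1 (Ioi 1)) (nhds (Real.sqrt 3)) := by
  have hratio (c : ℝ) : |bias c| / √(variance c) = √(bias c ^ 2 / variance c) := by
    rw [sqrt_div (sq_nonneg _), sqrt_sq_eq_abs]
  refine ⟨fun c hc => ?_, ?_⟩
  · exact (hratio c).trans_le (sqrt_le_sqrt (sq_bias_div_variance_le_three hc.le))
  · have hlog : Tendsto log (𝓝[>] 1) (𝓝 0) := by
      simpa using (continuousAt_log one_ne_zero).tendsto.mono_left nhdsWithin_le_nhds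
    have hsq : Tendsto (fun c => bias c ^ 2 / variance c) (𝓝[>] 1) (𝓝 3) := by
      have hlower := (hlog.const_mul (729 * exp 3 / 10)).const_sub 3
      rw [mul_zero, sub_zero] at hlower
      refine tendsto_of_tendsto_of_tendsto_of_le_of_le' hlower tendsto_const_nhds ?_ ?_
      · filter_upwards [Ioo_mem_nhdsGT (one_lt_exp_iff.2 one_pos)] with c hc
        exact three_sub_le_sq_bias_div_variance hc.1 hc.2.le
      · filter_upwards [self_mem_nhdsWithin] with c hc
        exact sq_bias_div_variance_le_three hc.out.le
    exact ((continuous_sqrt.tendsto 3).comp hsq).congr fun c => (hratio c).symm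
end

section
/- For all c > 1, one has |c·log(c) - c + 1| / sqrt(c·((c-1)^2 - c·(log c)^2)) ≥ (log(c) - 1)/sqrt(c). -/
open Real

/-!
If `log c ≤ 1` the left side is nonpositive. Otherwise write `c = s ^ 2`: the inequality
`x < sinh x` at `x = log s` gives `c (log c) ^ 2 < (c - 1) ^ 2`, so the square root in the
denominator is that of a positive number, and clearing it reduces the claim to a polynomial
inequality in `c` and `log c`.
-/

theorem Real.two_mul_log_lt_sub_inv {x : ℝ} (hx : 1 < x) : 2 * log x < x - x⁻¹ := by
  have h := self_lt_sinh_iff.mpr (log_pos hx)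
  rw [sinh_log (by linarith)] at h
  linarith

theorem Real.mul_log_sq_lt_sub_one_sq {c : ℝ} (hc : 1 < c) : c * log c ^ 2 < (c - 1) ^ 2 := by
  obtain ⟨s, hs, rfl⟩ : ∃ s, 1 < s ∧ s ^ 2 = c :=
    ⟨√c, lt_sqrt_of_sq_lt (by linarith), sq_sqrt (by linarith)⟩
  have hs0 : 0 < s := by linarith
  have hlog : 0 < log s := log_pos hs
  calc s ^ 2 * log (s ^ 2) ^ 2 = (s * (2 * log s)) ^ 2 := by rw [log_pow]; push_cast; ring
    _ < (s * (s - s⁻¹)) ^ 2 := by gcongr; exact two_mul_log_lt_sub_inv hs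
    _ = (s ^ 2 - 1) ^ 2 := by field_simp

theorem sub_one_sq_mul_le_sq {c L : ℝ} (hc : 1 ≤ 2 * c) (hL : 1 ≤ L) :
    (L - 1) ^ 2 * ((c - 1) ^ 2 - c * L ^ 2) ≤ (c * L - c + 1) ^ 2 := by
  have hx : 0 ≤ L - 1 := sub_nonneg.2 hL
  have hc' : 0 ≤ 2 * c - 1 := sub_nonneg.2 hc
  have hc0 : 0 ≤ c := by linarith
  calc (L - 1) ^ 2 * ((c - 1) ^ 2 - c * L ^ 2)
      ≤ (L - 1) ^ 2 * ((c - 1) ^ 2 - c * L ^ 2)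
        + (2 * c * (L - 1) + 1 + (2 * c - 1) * (L - 1) ^ 2 + c * ((L - 1) * L) ^ 2) :=
        le_add_of_nonneg_right (by positivity)
    _ = (c * L - c + 1) ^ 2 := by ring

theorem mul_sqrt_le_abs_of_sq_mul_le {a b D : ℝ} (hD : 0 ≤ D) (h : a ^ 2 * D ≤ b ^ 2) :
    a * √D ≤ |b| := by
  refine (le_abs_self _).trans (sq_le_sq.mp ?_)
  rwa [mul_pow, sq_sqrt hD]

/-- For c > 1, `|c·log c - c + 1| / sqrt(c((c-1)^2 - c(log c)^2)) ≥ (log c - 1)/√c`. -/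
theorem ratio_lower_bound (c : ℝ) (hc : 1 < c) :
    (Real.log c - 1) / Real.sqrt c
      ≤ |c * Real.log c - c + 1| / Real.sqrt (c * ((c - 1) ^ 2 - c * (Real.log c) ^ 2)) := by
  by_cases hL : log c ≤ 1
  · exact (div_nonpos_of_nonpos_of_nonneg (by linarith) (sqrt_nonneg _)).trans (by positivity)
  have hD : 0 < (c - 1) ^ 2 - c * log c ^ 2 := sub_pos.2 (mul_log_sq_lt_sub_one_sq hc)
  rw [sqrt_mul (by linarith), mul_comm √c, ← div_div]
  refine div_le_div_of_nonneg_right ?_ (sqrt_nonneg c)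
  rw [le_div_iff₀ (sqrt_pos.2 hD)]
  exact mul_sqrt_le_abs_of_sq_mul_le hD.le (sub_one_sq_mul_le_sq (by linarith) (by linarith))
end

section
/- For all c > 1, log(c) · (-2c + c·(log c)^3 - 2c·(log c)^2 + (3c-1)·log(c) + 2) ≥ 0. -/
/-!
Substitute `c = exp t` with `t = log c ≥ 0`: the claim becomes `t * g t ≥ 0` for
`g t = exp t * (t^3 - 2t^2 + 3t - 2) + 2 - t`. Now `g 0 = 0` and
`g' t = exp t * (t^3 + t^2 - t + 1) - 1 ≥ (1 + t)(t^3 + t^2 - t + 1) - 1 = t^4 + 2t^3 ≥ 0`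
for `t ≥ 0`, so `g` is nonnegative there.
-/

open Real Set

lemma hasDerivAt_exp_mul_cubic_add_two_sub (t : ℝ) :
    HasDerivAt (fun t => exp t * (t ^ 3 - 2 * t ^ 2 + 3 * t - 2) + 2 - t)
      (exp t * (t ^ 3 + t ^ 2 - t + 1) - 1) t := by
  have hcubic : HasDerivAt (fun t : ℝ => t ^ 3 - 2 * t ^ 2 + 3 * t - 2)
      (3 * t ^ 2 - 4 * t + 3) t := by
    exact ((((hasDerivAt_pow 3 t).fun_sub ((hasDerivAt_pow 2 t).const_mul 2)).fun_add
      ((hasDerivAt_id' t).const_mul 3)).sub_const 2).congr_deriv (by norm_num; ring)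
  exact ((((hasDerivAt_exp t).fun_mul hcubic).add_const 2).fun_sub
    (hasDerivAt_id' t)).congr_deriv (by ring)

lemma exp_mul_cubic_sub_one_nonneg {t : ℝ} (ht : 0 ≤ t) :
    0 ≤ exp t * (t ^ 3 + t ^ 2 - t + 1) - 1 := by
  have hcubic : 0 ≤ t ^ 3 + t ^ 2 - t + 1 := by
    nlinarith [sq_nonneg (t - 1), pow_nonneg ht 3]
  calc 0 ≤ t ^ 4 + 2 * t ^ 3 := by positivity
    _ = (t + 1) * (t ^ 3 + t ^ 2 - t + 1) - 1 := by ring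
    _ ≤ exp t * (t ^ 3 + t ^ 2 - t + 1) - 1 := by
      gcongr
      exact add_one_le_exp t

lemma exp_mul_cubic_add_two_sub_nonneg {t : ℝ} (ht : 0 ≤ t) :
    0 ≤ exp t * (t ^ 3 - 2 * t ^ 2 + 3 * t - 2) + 2 - t := by
  have hmono : MonotoneOn (fun t => exp t * (t ^ 3 - 2 * t ^ 2 + 3 * t - 2) + 2 - t)
      (Ici 0) := by
    refine monotoneOn_of_hasDerivWithinAt_nonneg (convex_Ici 0) (by fun_prop)
      (fun x _ => (hasDerivAt_exp_mul_cubic_add_two_sub x).hasDerivWithinAt) ?_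
    rw [interior_Ici]
    exact fun x hx => exp_mul_cubic_sub_one_nonneg (le_of_lt hx)
  simpa using hmono self_mem_Ici ht ht

/-- For all c > 1,
`log c · (-2c + c(log c)^3 - 2c(log c)^2 + (3c-1)·log c + 2) ≥ 0`. -/
theorem log_mul_f_nonneg (c : ℝ) (hc : 1 < c) :
    0 ≤ Real.log c *
      (-2 * c + c * (Real.log c) ^ 3 - 2 * c * (Real.log c) ^ 2
        + (3 * c - 1) * Real.log c + 2) := by
  obtain ⟨t, ht, rfl⟩ : ∃ t, 0 ≤ t ∧ exp t = c :=
    ⟨log c, log_nonneg hc.le, exp_log (by linarith)⟩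
  rw [log_exp]
  refine mul_nonneg ht ?_
  linarith [exp_mul_cubic_add_two_sub_nonneg ht]
end

section
/- The function g(c) = log((c·log(c) - c + 1)^2/(c-1)^4) / log(c·((c-1)^2 - c·(log c)^2)/(c-1)^4) satisfies lim_{c→1+} g(c) = log(4)/log(12) and lim_{c→∞} g(c) = 2. -/
/-!
Write `N c = c log c - c + 1` (bias) and `V c = (c - 1)^2 - c log² c` (variance). Near `c = 1`,
`log c = -∑_{i ≤ 4} (1 - c)^i / i + R c` with `R c = O((c - 1)^5)`; substituting gives
`N c / (c - 1)^2 → 1/2` and `V c / (c - 1)^4 → 1/12`, and continuity of `log` yields the limit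
`log (1/4) / log (1/12)`. As `c → ∞`, `N c ~ c log c` and `V c ~ c^2`, so after dividing by
`log c` the numerator `2 log N - 4 log (c - 1)` tends to `2 - 4` and the denominator
`log c + log V - 4 log (c - 1)` to `1 + 2 - 4`.
-/

open Real Filter Set Asymptotics Topology

theorem isBigO_log_one_sub_add_sum_range (n : ℕ) :
    (fun x : ℝ => log (1 - x) + ∑ i ∈ Finset.range n, x ^ (i + 1) / (i + 1))
      =O[𝓝 0] fun x => x ^ (n + 1) := by
  refine IsBigO.of_bound 2 ?_
  filter_upwards [Metric.ball_mem_nhds (0 : ℝ) one_half_pos] with x hx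
  rw [Metric.mem_ball, dist_zero_right, Real.norm_eq_abs] at hx
  rw [Real.norm_eq_abs, Real.norm_eq_abs, add_comm, abs_pow]
  calc _ ≤ |x| ^ (n + 1) / (1 - |x|) := abs_log_sub_add_sum_range_le (by linarith) n
    _ ≤ 2 * |x| ^ (n + 1) := by
      rw [div_le_iff₀ (by linarith)]
      nlinarith [pow_nonneg (abs_nonneg x) (n + 1)]

theorem tendsto_log_one_sub_add_sum_range_div_pow {n k : ℕ} (hk : k ≤ n) :
    Tendsto (fun x : ℝ => (log (1 - x) + ∑ i ∈ Finset.range n, x ^ (i + 1) / (i + 1)) / x ^ k)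
      (𝓝 0) (𝓝 0) :=
  ((isBigO_log_one_sub_add_sum_range n).trans_isLittleO
    (isLittleO_pow_pow (Nat.lt_succ_of_le hk))).tendsto_div_nhds_zero

noncomputable def logRem4 (c : ℝ) : ℝ :=
  log c + ((1 - c) + (1 - c) ^ 2 / 2 + (1 - c) ^ 3 / 3 + (1 - c) ^ 4 / 4)

theorem tendsto_logRem4_div_pow {k : ℕ} (hk : k ≤ 4) :
    Tendsto (fun c => logRem4 c / (1 - c) ^ k) (𝓝 1) (𝓝 0) := by
  have hsub : Tendsto (fun c : ℝ => 1 - c) (𝓝 1) (𝓝 0) := by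
    simpa using (continuous_sub_left (1 : ℝ)).tendsto 1
  convert (tendsto_log_one_sub_add_sum_range_div_pow hk).comp hsub using 2 with c
  norm_num [logRem4, Finset.sum_range_succ]

theorem bias_div_eq {c : ℝ} (hc : c ≠ 1) :
    (c * log c - c + 1) / (c - 1) ^ 2 =
      (1 / 2 + (1 - c) / 6 + (1 - c) ^ 2 / 12 + (1 - c) ^ 3 / 4)
        + c * (logRem4 c / (1 - c) ^ 2) := by
  have : 1 - c ≠ 0 := sub_ne_zero.mpr hc.symm
  have : c - 1 ≠ 0 := sub_ne_zero.mpr hc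
  field_simp
  unfold logRem4
  ring

theorem var_div_eq {c : ℝ} (hc : c ≠ 1) :
    ((c - 1) ^ 2 - c * log c ^ 2) / (c - 1) ^ 4 =
      (1 / 12 + (1 - c) / 12 + 17 * (1 - c) ^ 2 / 36 + 7 * (1 - c) ^ 3 / 36
        + 5 * (1 - c) ^ 4 / 48 + (1 - c) ^ 5 / 16)
      - c * (logRem4 c / (1 - c) ^ 4) * (2 * log c - logRem4 c) := by
  have : 1 - c ≠ 0 := sub_ne_zero.mpr hc.symm
  have : c - 1 ≠ 0 := sub_ne_zero.mpr hc
  field_simp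
  unfold logRem4
  ring

theorem tendsto_bias_div :
    Tendsto (fun c => (c * log c - c + 1) / (c - 1) ^ 2) (𝓝[≠] 1) (𝓝 (1 / 2)) := by
  have hpoly : Tendsto (fun c : ℝ => 1 / 2 + (1 - c) / 6 + (1 - c) ^ 2 / 12 + (1 - c) ^ 3 / 4)
      (𝓝 1) (𝓝 (1 / 2)) := Continuous.tendsto' (by fun_prop) 1 _ (by norm_num)
  have hlim := hpoly.add (tendsto_id.mul (tendsto_logRem4_div_pow (k := 2) (by norm_num)))
  rw [mul_zero, add_zero] at hlim
  refine (tendsto_nhdsWithin_of_tendsto_nhds hlim).congr' ?_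
  filter_upwards [self_mem_nhdsWithin] with c hc
  exact (bias_div_eq hc).symm

theorem tendsto_var_div :
    Tendsto (fun c => ((c - 1) ^ 2 - c * log c ^ 2) / (c - 1) ^ 4) (𝓝[≠] 1)
      (𝓝 (1 / 12)) := by
  have hpoly : Tendsto (fun c : ℝ => 1 / 12 + (1 - c) / 12 + 17 * (1 - c) ^ 2 / 36
      + 7 * (1 - c) ^ 3 / 36 + 5 * (1 - c) ^ 4 / 48 + (1 - c) ^ 5 / 16) (𝓝 1) (𝓝 (1 / 12)) :=
    Continuous.tendsto' (by fun_prop) 1 _ (by norm_num)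
  have hrem : Tendsto logRem4 (𝓝 1) (𝓝 0) := by
    simpa using tendsto_logRem4_div_pow (k := 0) (by norm_num)
  have hlog : Tendsto log (𝓝 1) (𝓝 0) := by
    simpa using (continuousAt_log one_ne_zero).tendsto
  have hlim := hpoly.sub ((tendsto_id.mul (tendsto_logRem4_div_pow (k := 4) (by norm_num))).mul
    ((hlog.const_mul 2).sub hrem))
  rw [mul_zero, zero_mul, sub_zero] at hlim
  refine (tendsto_nhdsWithin_of_tendsto_nhds hlim).congr' ?_
  filter_upwards [self_mem_nhdsWithin] with c hc
  exact (var_div_eq hc).symm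

theorem tendsto_log_ratio_nhdsNE_one :
    Tendsto (fun c : ℝ => log ((c * log c - c + 1) ^ 2 / (c - 1) ^ 4) /
        log (c * ((c - 1) ^ 2 - c * log c ^ 2) / (c - 1) ^ 4))
      (𝓝[≠] 1) (𝓝 (log 4 / log 12)) := by
  have hnum := (tendsto_bias_div.pow 2).log (by norm_num)
  have hden := ((tendsto_nhdsWithin_of_tendsto_nhds tendsto_id).mul tendsto_var_div).log
    (by norm_num)
  have hlim := hnum.div hden (by norm_num [log_ne_zero])
  convert hlim using 2 with c
  · simp only [Pi.div_apply, id, div_pow, ← pow_mul, mul_div_assoc]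
  · rw [show ((1 : ℝ) / 2) ^ 2 = 4⁻¹ by norm_num,
      show (1 : ℝ) * (1 / 12) = 12⁻¹ by norm_num, log_inv, log_inv, neg_div_neg_eq]

theorem tendsto_log_div_of_tendsto_div {α : Type*} {l : Filter α} {f h b : α → ℝ} {L a : ℝ}
    (hL : L ≠ 0) (hb : Tendsto b l atTop) (hfh : Tendsto (fun x => f x / h x) l (𝓝 L))
    (hh : Tendsto (fun x => log (h x) / b x) l (𝓝 a)) :
    Tendsto (fun x => log (f x) / b x) l (𝓝 a) := by
  have hlim := ((hfh.log hL).div_atTop hb).add hh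
  rw [zero_add] at hlim
  refine hlim.congr' ?_
  filter_upwards [hfh.eventually_ne hL] with x hx
  obtain ⟨hfx, hhx⟩ := div_ne_zero_iff.mp hx
  rw [log_div hfx hhx, ← add_div, sub_add_cancel]

theorem tendsto_log_div_log_self : Tendsto (fun c => log c / log c) atTop (𝓝 1) :=
  tendsto_const_nhds.congr' <| by
    filter_upwards [eventually_gt_atTop 1] with c hc
    exact (div_self (log_pos hc).ne').symm

theorem tendsto_sub_one_div_self : Tendsto (fun c : ℝ => (c - 1) / c) atTop (𝓝 1) := by
  have hlim := (tendsto_const_nhds (x := (1 : ℝ)) (f := atTop)).sub tendsto_inv_atTop_zero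
  rw [sub_zero] at hlim
  refine hlim.congr' ?_
  filter_upwards [eventually_gt_atTop 0] with c hc
  field_simp

theorem tendsto_bias_div_mul_log :
    Tendsto (fun c => (c * log c - c + 1) / (c * log c)) atTop (𝓝 1) := by
  have hinv : Tendsto (fun c => (log c)⁻¹) atTop (𝓝 0) :=
    tendsto_inv_atTop_zero.comp tendsto_log_atTop
  have hinv' : Tendsto (fun c => (c * log c)⁻¹) atTop (𝓝 0) :=
    tendsto_inv_atTop_zero.comp (tendsto_id.atTop_mul_atTop₀ tendsto_log_atTop)
  have hlim := (tendsto_const_nhds (x := (1 : ℝ)).sub hinv).add hinv'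
  rw [sub_zero, add_zero] at hlim
  refine hlim.congr' ?_
  filter_upwards [eventually_gt_atTop 1] with c hc
  have : log c ≠ 0 := (log_pos hc).ne'
  have : c ≠ 0 := by positivity
  field_simp

theorem tendsto_var_div_sq :
    Tendsto (fun c => ((c - 1) ^ 2 - c * log c ^ 2) / c ^ 2) atTop (𝓝 1) := by
  have hlim := (tendsto_sub_one_div_self.pow 2).sub
    (by simpa using tendsto_pow_log_div_mul_add_atTop 1 0 2 one_ne_zero)
  rw [one_pow, sub_zero] at hlim
  refine hlim.congr' ?_
  filter_upwards [eventually_gt_atTop 0] with c hc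
  field_simp

theorem tendsto_log_sub_one_div_log : Tendsto (fun c => log (c - 1) / log c) atTop (𝓝 1) :=
  tendsto_log_div_of_tendsto_div one_ne_zero tendsto_log_atTop tendsto_sub_one_div_self
    tendsto_log_div_log_self

theorem tendsto_log_bias_div_log :
    Tendsto (fun c => log (c * log c - c + 1) / log c) atTop (𝓝 1) := by
  refine tendsto_log_div_of_tendsto_div one_ne_zero tendsto_log_atTop tendsto_bias_div_mul_log ?_
  have hloglog : Tendsto (fun c => log (log c) / log c) atTop (𝓝 0) :=
    isLittleO_log_id_atTop.tendsto_div_nhds_zero.comp tendsto_log_atTop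
  have hlim := tendsto_log_div_log_self.add hloglog
  rw [add_zero] at hlim
  refine hlim.congr' ?_
  filter_upwards [eventually_gt_atTop 1] with c hc
  rw [log_mul (by positivity) (log_pos hc).ne', add_div]

theorem tendsto_log_var_div_log :
    Tendsto (fun c => log ((c - 1) ^ 2 - c * log c ^ 2) / log c) atTop (𝓝 2) := by
  refine tendsto_log_div_of_tendsto_div one_ne_zero tendsto_log_atTop tendsto_var_div_sq ?_
  refine tendsto_const_nhds.congr' ?_
  filter_upwards [eventually_gt_atTop 1] with c hc
  rw [log_pow, mul_div_assoc, div_self (log_pos hc).ne']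
  norm_num

theorem tendsto_log_ratio_atTop :
    Tendsto (fun c : ℝ => log ((c * log c - c + 1) ^ 2 / (c - 1) ^ 4) /
        log (c * ((c - 1) ^ 2 - c * log c ^ 2) / (c - 1) ^ 4)) atTop (𝓝 2) := by
  have hnum := (tendsto_log_bias_div_log.const_mul 2).sub (tendsto_log_sub_one_div_log.const_mul 4)
  have hden := (tendsto_log_div_log_self.add tendsto_log_var_div_log).sub
    (tendsto_log_sub_one_div_log.const_mul 4)
  have hlim := hnum.div hden (by norm_num)
  rw [show (2 * 1 - 4 * 1) / (1 + 2 - 4 * 1) = (2 : ℝ) by norm_num] at hlim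
  refine hlim.congr' ?_
  filter_upwards [eventually_gt_atTop 1, tendsto_bias_div_mul_log.eventually_ne one_ne_zero,
    tendsto_var_div_sq.eventually_ne one_ne_zero] with c hc hbias hvar
  simp only [Pi.div_apply]
  have hc0 : c ≠ 0 := by positivity
  have hlogc : log c ≠ 0 := (log_pos hc).ne'
  rw [log_div (by simpa using (div_ne_zero_iff.mp hbias).1) (by positivity),
    log_div (mul_ne_zero hc0 (div_ne_zero_iff.mp hvar).1) (by positivity),
    log_mul hc0 (div_ne_zero_iff.mp hvar).1, log_pow, log_pow]
  field_simp
  push_cast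
  ring

/-- The log-scale bias-to-variance ratio
`g(c) = log((c·log c - c + 1)^2/(c-1)^4) / log(c((c-1)^2 - c(log c)^2)/(c-1)^4)`
tends to `log 4 / log 12` as `c → 1⁺` and to `2` as `c → ∞`. -/
theorem log_ratio_limits :
    Tendsto
      (fun c : ℝ =>
        Real.log ((c * Real.log c - c + 1) ^ 2 / (c - 1) ^ 4) /
          Real.log (c * ((c - 1) ^ 2 - c * (Real.log c) ^ 2) / (c - 1) ^ 4))
      (nhdsWithin 1 (Ioi 1)) (nhds (Real.log 4 / Real.log 12)) ∧
    Tendsto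
      (fun c : ℝ =>
        Real.log ((c * Real.log c - c + 1) ^ 2 / (c - 1) ^ 4) /
          Real.log (c * ((c - 1) ^ 2 - c * (Real.log c) ^ 2) / (c - 1) ^ 4))
      atTop (nhds 2) :=
  ⟨tendsto_log_ratio_nhdsNE_one.mono_left (nhdsWithin_mono _ fun _ hc => ne_of_gt hc),
    tendsto_log_ratio_atTop⟩
end

section
/- With BVG = Σ_{i∈[K]} BVG(i) the total bias-variance gap, E_{Y|X}[BVG] = 1 - E_θ||h_θ(·|X)||_2^2 + 2·Σ_{i∈[K]} h(i|X)·Δ(i|X), where Δ(i|X) = h(i|X) - P(Y=i|X). In particular, if the model is sample-wise perfectly calibrated (Δ(i|X)=0 for all i), then E_{Y|X}[BVG] = 1 - E_θ||h_θ(·|X)||_2^2 ≥ 0, i.e., variance is bounded above by squared bias in expectation. -/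
/-!
Averaged over `Y ~ p`, the squared bias is `∑ᵢ (h i - 1{Y = i})² = ‖h‖² - 2 h Y + 1`, so its mean
is `‖h‖² - 2 ⟪h, p⟫ + 1`; the variance of each coordinate is `E_θ[h_θ(i)²] - h(i)²`. Subtracting
the two gives `1 - E_θ‖h_θ‖² + 2 ⟪h, h - p⟫`. The remaining term is nonnegative because a
probability vector satisfies `‖q‖₂² ≤ (∑ᵢ qᵢ)² = 1`.
-/

open MeasureTheory Finset

lemma integral_sub_integral_sq {Ω : Type*} [MeasurableSpace Ω] {μ : Measure Ω}
    [IsProbabilityMeasure μ] {X : Ω → ℝ} (hX : MemLp X 2 μ) :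
    ∫ ω, (X ω - ∫ ω', X ω' ∂μ) ^ 2 ∂μ = ∫ ω, X ω ^ 2 ∂μ - (∫ ω, X ω ∂μ) ^ 2 := by
  rw [← ProbabilityTheory.variance_eq_integral hX.aestronglyMeasurable.aemeasurable,
    ProbabilityTheory.variance_eq_sub hX]
  rfl

lemma sum_sq_le_one_of_sum_eq_one {ι : Type*} {s : Finset ι} {q : ι → ℝ}
    (hq : ∀ i ∈ s, 0 ≤ q i) (hqs : ∑ i ∈ s, q i = 1) : ∑ i ∈ s, q i ^ 2 ≤ 1 := by
  simpa [hqs] using sum_sq_le_sq_sum_of_nonneg hq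

lemma sum_sq_sub_indicator {ι : Type*} [Fintype ι] [DecidableEq ι] (h : ι → ℝ) (y : ι) :
    ∑ i, (h i - if y = i then 1 else 0) ^ 2 = ∑ i, h i ^ 2 - 2 * h y + 1 := by
  have hexpand (i : ι) : (h i - if y = i then 1 else 0) ^ 2
      = h i ^ 2 - 2 * (if y = i then h i else 0) + (if y = i then 1 else 0) := by
    split_ifs <;> ring
  simp only [hexpand, sum_add_distrib, sum_sub_distrib, ← mul_sum, sum_ite_eq, mem_univ, if_true]

lemma sum_mul_sum_sq_sub_indicator_sub {ι : Type*} [Fintype ι] [DecidableEq ι]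
    (p h s : ι → ℝ) (hps : ∑ i, p i = 1) :
    ∑ y, p y * ∑ i, ((h i - if y = i then 1 else 0) ^ 2 - (s i - h i ^ 2))
      = 1 - ∑ i, s i + 2 * ∑ i, h i * (h i - p i) := by
  have hy (y : ι) : ∑ i, ((h i - if y = i then 1 else 0) ^ 2 - (s i - h i ^ 2))
      = (2 * ∑ i, h i ^ 2 - ∑ i, s i + 1) - 2 * h y := by
    rw [sum_sub_distrib, sum_sq_sub_indicator, sum_sub_distrib]; ring
  simp only [hy, mul_sub, sum_sub_distrib, ← sum_mul, hps, mul_left_comm _ (2 : ℝ), ← mul_sum,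
    mul_comm (p _) (h _), ← sq]
  ring

theorem total_BVG_general {Θ : Type*} [MeasurableSpace Θ]
    (Pθ : Measure Θ) [IsProbabilityMeasure Pθ]
    (K : ℕ) (hθ : Θ → Fin K → ℝ) (p : Fin K → ℝ)
    (hps : ∑ i, p i = 1)
    (hprob : ∀ θ, (∀ i, 0 ≤ hθ θ i) ∧ ∑ i, hθ θ i = 1)
    (hint : ∀ i, Integrable (fun θ => hθ θ i) Pθ)
    (h : Fin K → ℝ) (hdef : ∀ i, h i = ∫ θ, hθ θ i ∂Pθ) :
    (∑ y : Fin K, p y * (∑ i : Fin K,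
        ((h i - (if y = i then (1 : ℝ) else 0)) ^ 2
          - ∫ θ, (hθ θ i - h i) ^ 2 ∂Pθ))
      = 1 - (∫ θ, ∑ i, (hθ θ i) ^ 2 ∂Pθ) + 2 * ∑ i : Fin K, h i * (h i - p i)) ∧
    ((∀ i, h i = p i) →
      (∑ y : Fin K, p y * (∑ i : Fin K,
          ((h i - (if y = i then (1 : ℝ) else 0)) ^ 2
            - ∫ θ, (hθ θ i - h i) ^ 2 ∂Pθ))
        = 1 - ∫ θ, ∑ i, (hθ θ i) ^ 2 ∂Pθ) ∧
      0 ≤ 1 - ∫ θ, ∑ i, (hθ θ i) ^ 2 ∂Pθ) := by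
  have hmem (i : Fin K) : MemLp (fun θ => hθ θ i) 2 Pθ := by
    refine memLp_of_bounded (a := 0) (b := 1) (ae_of_all _ fun θ => ⟨(hprob θ).1 i, ?_⟩)
      (hint i).aestronglyMeasurable 2
    exact (hprob θ).2 ▸ single_le_sum (fun j _ => (hprob θ).1 j) (mem_univ i)
  have hvar (i : Fin K) : ∫ θ, (hθ θ i - h i) ^ 2 ∂Pθ = ∫ θ, hθ θ i ^ 2 ∂Pθ - h i ^ 2 := by
    simpa only [← hdef i] using integral_sub_integral_sq (hmem i)
  have hsum : ∫ θ, ∑ i, hθ θ i ^ 2 ∂Pθ = ∑ i, ∫ θ, hθ θ i ^ 2 ∂Pθ :=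
    integral_finsetSum _ fun i _ => (hmem i).integrable_sq
  have identity : ∑ y, p y * ∑ i, ((h i - if y = i then 1 else 0) ^ 2
        - ∫ θ, (hθ θ i - h i) ^ 2 ∂Pθ)
      = 1 - ∫ θ, ∑ i, hθ θ i ^ 2 ∂Pθ + 2 * ∑ i, h i * (h i - p i) := by
    simpa only [hvar, hsum] using sum_mul_sum_sq_sub_indicator_sub p h _ hps
  have hnorm_le : ∫ θ, ∑ i, hθ θ i ^ 2 ∂Pθ ≤ 1 := by
    calc ∫ θ, ∑ i, hθ θ i ^ 2 ∂Pθ ≤ ∫ _, 1 ∂Pθ :=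
          integral_mono_of_nonneg (ae_of_all _ fun θ => by positivity) (integrable_const 1)
            (ae_of_all _ fun θ =>
              sum_sq_le_one_of_sum_eq_one (fun i _ => (hprob θ).1 i) (hprob θ).2)
      _ = 1 := by simp
  refine ⟨identity, fun hcal => ⟨?_, sub_nonneg.2 hnorm_le⟩⟩
  rw [identity]
  simp [hcal]

/-- Total bias-variance gap identity:
`E_{Y|X}[BVG] = 1 - E_θ‖h_θ(·|X)‖² + 2∑_i h(i|X)Δ(i|X)`,
and under sample-wise perfect calibration (`Δ(i|X) = 0` for all `i`)
`E_{Y|X}[BVG] = 1 - E_θ‖h_θ(·|X)‖² ≥ 0`. -/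
theorem total_BVG {Θ : Type*} [MeasurableSpace Θ]
    (Pθ : Measure Θ) [IsProbabilityMeasure Pθ]
    (K : ℕ) (hθ : Θ → Fin K → ℝ) (p : Fin K → ℝ)
    (hp : ∀ i, 0 ≤ p i) (hps : ∑ i, p i = 1)
    (hprob : ∀ θ, (∀ i, 0 ≤ hθ θ i) ∧ ∑ i, hθ θ i = 1)
    (hint : ∀ i, Integrable (fun θ => hθ θ i) Pθ)
    (hint2 : Integrable (fun θ => ∑ i, (hθ θ i) ^ 2) Pθ)
    (h : Fin K → ℝ) (hdef : ∀ i, h i = ∫ θ, hθ θ i ∂Pθ) :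
    (∑ y : Fin K, p y * (∑ i : Fin K,
        ((h i - (if y = i then (1 : ℝ) else 0)) ^ 2
          - ∫ θ, (hθ θ i - h i) ^ 2 ∂Pθ))
      = 1 - (∫ θ, ∑ i, (hθ θ i) ^ 2 ∂Pθ) + 2 * ∑ i : Fin K, h i * (h i - p i)) ∧
    ((∀ i, h i = p i) →
      (∑ y : Fin K, p y * (∑ i : Fin K,
          ((h i - (if y = i then (1 : ℝ) else 0)) ^ 2
            - ∫ θ, (hθ θ i - h i) ^ 2 ∂Pθ))
        = 1 - ∫ θ, ∑ i, (hθ θ i) ^ 2 ∂Pθ) ∧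
      0 ≤ 1 - ∫ θ, ∑ i, (hθ θ i) ^ 2 ∂Pθ) :=
  total_BVG_general Pθ K hθ p hps hprob hint h hdef
end

section
/- There exists a binary classification setup where the KL-divergence bias-variance decomposition has expected bias log 2 and the expected variance can take any value in (0, ∞): specifically, with P(Y=i|x) = 1/2 for i=1,2, and ensemble h_1(1|x) = ε, h_1(2|x) = 1-ε, h_2(1|x) = 1-ε, h_2(2|x) = ε with θ uniform on {1,2}, the geometric-mean function h satisfies h(i|x) = 1/2 (so Bias² = KL(e_Y || h(·|x)) = log 2), and the variance equals -log 2 - (1/2)·log(ε(1-ε)), which ranges over (0,∞) as ε ranges over (0, 1/2). -/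
/-!
The two ensemble members are mirror images, so the geometric means of the two class
probabilities agree and the normalised mean function is uniform: its bias is `log 2`.
The normaliser is `Z = 2 √(ε(1-ε))`, so the variance is `-log 2 - log (ε(1-ε)) / 2`.
Since `ε(1-ε) < 1/4` for `ε ≠ 1/2` this is positive, and as `ε(1-ε)` sweeps `(0, 1/4)` for
`ε ∈ (0, 1/2)` (intermediate value theorem) the variance sweeps `(0, ∞)`.
-/

open Real Set

lemma log_one_div_four : log (1 / 4) = -(2 * log 2) := by
  rw [one_div, log_inv, show (4 : ℝ) = 2 ^ 2 by norm_num, log_pow]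
  push_cast
  ring

lemma mul_one_sub_lt_one_div_four {K : Type*} [Field K] [LinearOrder K] [IsStrictOrderedRing K]
    {ε : K} (hε : ε ≠ 1 / 2) : ε * (1 - ε) < 1 / 4 := by
  nlinarith [sq_pos_of_ne_zero (sub_ne_zero.2 hε)]

lemma exists_mul_one_sub_eq {c : ℝ} (hc₀ : 0 < c) (hc : c < 1 / 4) :
    ∃ ε, 0 < ε ∧ ε < 1 / 2 ∧ ε * (1 - ε) = c := by
  have hcont : ContinuousOn (fun ε : ℝ => ε * (1 - ε)) (Icc 0 (1 / 2)) := by fun_prop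
  have hmem : c ∈ Ioo ((0 : ℝ) * (1 - 0)) (1 / 2 * (1 - 1 / 2)) := by norm_num [hc₀, hc]
  obtain ⟨ε, ⟨hε₀, hε⟩, hεc⟩ := intermediate_value_Ioo (by norm_num) hcont hmem
  exact ⟨ε, hε₀, hε, hεc⟩

lemma neg_log_two_mul_exp (t : ℝ) : -log (2 * exp t) = -log 2 - t := by
  rw [log_mul two_ne_zero (exp_pos t).ne', log_exp]
  ring

lemma neg_log_two_sub_half_log_pos {p : ℝ} (hp₀ : 0 < p) (hp : p < 1 / 4) :
    0 < -log 2 - log p / 2 := by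
  have := log_lt_log hp₀ hp
  rw [log_one_div_four] at this
  linarith

lemma exists_neg_log_two_sub_half_log_eq {r : ℝ} (hr : 0 < r) :
    ∃ p, 0 < p ∧ p < 1 / 4 ∧ -log 2 - log p / 2 = r := by
  refine ⟨exp (-2 * r) * (1 / 4), by positivity, ?_, ?_⟩
  · have : exp (-2 * r) < 1 := exp_lt_one_iff.2 (by linarith)
    linarith
  · rw [log_mul (exp_pos _).ne' (by norm_num), log_exp, log_one_div_four]
    ring

/-- In the KL bias-variance decomposition of the binary ensemble
`h_1 = (ε, 1-ε)`, `h_2 = (1-ε, ε)` with θ uniform on {1,2} and `P(Y=i|x) = 1/2`: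
the geometric-mean function equals `1/2` on each class (so the bias
`KL(e_Y‖h) = -log(1/2) = log 2`), the variance `-log Z` equals
`-log 2 - (1/2)log(ε(1-ε))` and is positive, and it attains every value in `(0, ∞)`
as ε ranges over `(0, 1/2)`. -/
theorem kl_bias_variance_no_correlation :
    (∀ ε : ℝ, 0 < ε → ε < 1 / 2 →
      (Real.exp ((Real.log ε + Real.log (1 - ε)) / 2) /
          (2 * Real.exp ((Real.log ε + Real.log (1 - ε)) / 2)) = 1 / 2) ∧
      (-Real.log (1 / 2 : ℝ) = Real.log 2) ∧
      (-Real.log (2 * Real.exp ((Real.log ε + Real.log (1 - ε)) / 2))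
          = -Real.log 2 - Real.log (ε * (1 - ε)) / 2) ∧
      0 < -Real.log 2 - Real.log (ε * (1 - ε)) / 2) ∧
    (∀ r : ℝ, 0 < r → ∃ ε : ℝ, 0 < ε ∧ ε < 1 / 2 ∧
      -Real.log 2 - Real.log (ε * (1 - ε)) / 2 = r) := by
  refine ⟨fun ε hε₀ hε => ⟨?_, ?_, ?_, ?_⟩, fun r hr => ?_⟩
  · have := (exp_pos ((log ε + log (1 - ε)) / 2)).ne'
    field_simp
  · rw [one_div, log_inv, neg_neg]
  · rw [neg_log_two_mul_exp, log_mul hε₀.ne' (by linarith)]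
  · exact neg_log_two_sub_half_log_pos (by nlinarith) (mul_one_sub_lt_one_div_four hε.ne)
  · obtain ⟨p, hp₀, hp, rfl⟩ := exists_neg_log_two_sub_half_log_eq hr
    obtain ⟨ε, hε₀, hε, hεp⟩ := exists_mul_one_sub_eq hp₀ hp
    exact ⟨ε, hε₀, hε, by rw [hεp]⟩
end
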